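/- arXiv:2406.09724 — 2 statements merged into one kernel-verified Lean document; each statement's English description precedes it below -/
import Mathlib

section
/- Let (W, pW) be a discrete valuation ring whose maximal ideal is generated by p, let S = W[X_1, …, X_{n-1}]_{(p, X_1, …, X_{n-1})} be the localization of the polynomial ring at the maximal ideal m_S = (p, X_1, …, X_{n-1}), let f(X) ∈ S[X] be a monic irreducible polynomial, and let m̃ be a maximal ideal of S[X]/(f(X)) containing the image x of X. If the localization R = (S[X]/(f(X)))_{m̃} is a regular local ring with maximal ideal m satisfying p ∈ m² (i.e., R is ramified), then the constant term f(0) of f and the coefficient of X in f both lie in m_S. -/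
/-!
Write `T = S[X]/(f)`, `x` for the root and `J = (X₁, …, X_{n-1})`. Since `T` is finite over
`S`, `m̃` lies over `m_S`; as every `g(x) ∈ T` is `g(0) + x·(…)` and `x ∈ m̃`, this gives
`f(0) ∈ m_S` and `m̃ ⊆ m_S T + (x)`. If the coefficient of `X` in `f` were a unit, `f(x) = 0`
would put `x` in `m_S T + m̃²`, so `m ⊆ m_S R + m² = J R + m²` because `p ∈ m²`, and Nakayama
gives `m = J R`. Then `p ∈ J R`; pulling back along the localization `R` of `T` and reading off
the constant coordinate in the `S`-basis `1, x, x², …` of `T` gives `p ∈ J S`, and a further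
pull-back to the polynomial ring gives `c p ∈ J` with `c ∉ I`, which fails at the constant terms.
-/

open IsLocalRing Polynomial

namespace AdjoinRoot

variable {S : Type*} [CommRing S] {f : S[X]}

theorem mk_eq_algebraMap_coeff_zero_add_root_mul (g : S[X]) :
    mk f g = algebraMap S (AdjoinRoot f) (g.coeff 0) + root f * mk f g.divX := by
  conv_lhs => rw [← divX_mul_X_add g]
  rw [map_add, map_mul, mk_X, mk_C, algebraMap_eq]
  ring

theorem mk_mem_iff_coeff_zero_mem {M : Ideal (AdjoinRoot f)} (hM : root f ∈ M) (g : S[X]) :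
    mk f g ∈ M ↔ g.coeff 0 ∈ M.comap (algebraMap S (AdjoinRoot f)) := by
  rw [mk_eq_algebraMap_coeff_zero_add_root_mul, Ideal.mem_comap]
  exact M.add_mem_iff_left (M.mul_mem_right _ hM)

theorem coeff_zero_mem_comap {M : Ideal (AdjoinRoot f)} (hM : root f ∈ M) :
    f.coeff 0 ∈ M.comap (algebraMap S (AdjoinRoot f)) :=
  (mk_mem_iff_coeff_zero_mem hM f).mp (by simp only [mk_self, M.zero_mem])

theorem root_mem_map_comap_sup_sq {M : Ideal (AdjoinRoot f)} (hM : root f ∈ M)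
    (h1 : IsUnit (f.coeff 1)) :
    root f ∈ (M.comap (algebraMap S (AdjoinRoot f))).map (algebraMap S _) ⊔ M ^ 2 := by
  set x := root f
  set a := algebraMap S (AdjoinRoot f)
  have hf : a (f.coeff 0) + x * (a (f.coeff 1) + x * mk f f.divX.divX) = 0 := by
    rw [← coeff_divX, ← mk_eq_algebraMap_coeff_zero_add_root_mul,
      ← mk_eq_algebraMap_coeff_zero_add_root_mul, mk_self]
  have hlin : x * a (f.coeff 1) = -a (f.coeff 0) - mk f f.divX.divX * (x * x) := by
    linear_combination hf
  obtain ⟨u, hu⟩ := (h1.map a).exists_right_inv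
  have hx : x = (x * a (f.coeff 1)) * u := by rw [mul_assoc, hu, mul_one]
  rw [hx, hlin]
  refine Ideal.mul_mem_right _ _ (Ideal.sub_mem _ (Ideal.mem_sup_left ?_) (Ideal.mem_sup_right ?_))
  · exact neg_mem (Ideal.mem_map_of_mem _ (coeff_zero_mem_comap hM))
  · exact Ideal.mul_mem_left _ _ (sq M ▸ Ideal.mul_mem_mul hM hM)

theorem le_map_comap_sup_sq {M : Ideal (AdjoinRoot f)} (hM : root f ∈ M)
    (h1 : IsUnit (f.coeff 1)) :
    M ≤ (M.comap (algebraMap S (AdjoinRoot f))).map (algebraMap S _) ⊔ M ^ 2 := by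
  intro t ht
  obtain ⟨g, rfl⟩ := mk_surjective t
  rw [mk_eq_algebraMap_coeff_zero_add_root_mul]
  refine Ideal.add_mem _ (Ideal.mem_sup_left (Ideal.mem_map_of_mem _ ?_))
    (Ideal.mul_mem_right _ _ (root_mem_map_comap_sup_sq hM h1))
  exact (mk_mem_iff_coeff_zero_mem hM g).mp ht

theorem coeff_modByMonicHom_mem_of_mem_map (hf : f.Monic) {J : Ideal S} {t : AdjoinRoot f}
    (ht : t ∈ J.map (algebraMap S (AdjoinRoot f))) (i : ℕ) :
    (modByMonicHom hf t).coeff i ∈ J := by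
  let L : AdjoinRoot f →ₗ[S] S := (lcoeff S i).comp (modByMonicHom hf)
  have hJ : J • (⊤ : Submodule S (AdjoinRoot f)) ≤ Submodule.comap L J :=
    Submodule.smul_le.mpr fun r hr t _ => by
      simpa only [Submodule.mem_comap, LinearMap.map_smul, smul_eq_mul]
        using J.mul_mem_right (L t) hr
  rw [← Submodule.restrictScalars_mem S, ← Ideal.smul_top_eq_map] at ht
  exact hJ ht

theorem comap_eq_maximalIdeal [IsLocalRing S] (hf : f.Monic) (M : Ideal (AdjoinRoot f))
    [M.IsMaximal] : M.comap (algebraMap S (AdjoinRoot f)) = maximalIdeal S :=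
  have : Module.Finite S (AdjoinRoot f) := (powerBasis' hf).finite
  have : Algebra.IsIntegral S (AdjoinRoot f) := Algebra.IsIntegral.of_finite S _
  eq_maximalIdeal (Ideal.isMaximal_comap_of_isIntegral_of_isMaximal M)

theorem mem_of_algebraMap_mul_mem_map [IsLocalRing S] (hf : f.Monic) {M : Ideal (AdjoinRoot f)}
    (hM : root f ∈ M) (hcomap : maximalIdeal S ≤ M.comap (algebraMap S (AdjoinRoot f)))
    {J : Ideal S} {a : S} {w : AdjoinRoot f} (hw : w ∉ M)
    (h : algebraMap S (AdjoinRoot f) a * w ∈ J.map (algebraMap S _)) : a ∈ J := by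
  set c := (modByMonicHom hf w).coeff 0
  have hc : IsUnit c := by
    refine notMem_maximalIdeal.mp fun hc => hw ?_
    rw [← mk_leftInverse hf w, mk_mem_iff_coeff_zero_mem hM]
    exact hcomap hc
  have hac := coeff_modByMonicHom_mem_of_mem_map hf h 0
  rwa [← Algebra.smul_def, map_smul, coeff_smul, smul_eq_mul, J.mul_unit_mem_iff_mem hc] at hac

end AdjoinRoot

theorem IsLocalRing.maximalIdeal_le_of_le_sup_sq {R : Type*} [CommRing R] [IsLocalRing R]
    [IsNoetherianRing R] {J : Ideal R} (h : maximalIdeal R ≤ J ⊔ maximalIdeal R ^ 2) :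
    maximalIdeal R ≤ J :=
  Submodule.le_of_le_smul_of_le_jacobson_bot (IsNoetherian.noetherian _)
    (maximalIdeal_le_jacobson ⊥) (by rwa [smul_eq_mul, ← sq])

namespace MvPolynomial

theorem mem_idealOfVars_iff_constantCoeff_eq_zero {σ R : Type*} [CommRing R]
    {c : MvPolynomial σ R} :
    c ∈ idealOfVars σ R ↔ constantCoeff c = 0 := by
  rw [← pow_one (idealOfVars σ R), mem_pow_idealOfVars_iff']
  simp [Finsupp.degree_eq_zero_iff, constantCoeff_eq]

theorem mem_idealOfVars_of_mul_C_mem {σ R : Type*} [CommRing R] [NoZeroDivisors R] {a : R}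
    (ha : a ≠ 0) {c : MvPolynomial σ R} (h : c * C a ∈ idealOfVars σ R) :
    c ∈ idealOfVars σ R := by
  rw [mem_idealOfVars_iff_constantCoeff_eq_zero, map_mul, constantCoeff_C] at h
  exact mem_idealOfVars_iff_constantCoeff_eq_zero.mpr ((mul_eq_zero.mp h).resolve_right ha)

end MvPolynomial

theorem coeff_mem_maximalIdeal_of_ramified_general
    (p : ℕ)
    (W : Type) [CommRing W] [IsDomain W] [IsDiscreteValuationRing W]
    (hW : maximalIdeal W = Ideal.span {(p : W)})
    (n : ℕ) (I : Ideal (MvPolynomial (Fin (n - 1)) W))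
    (hI : I = Ideal.span ({MvPolynomial.C (p : W)} ∪ Set.range MvPolynomial.X))
    [I.IsMaximal]
    (S : Type) [CommRing S] [IsLocalRing S]
    [Algebra (MvPolynomial (Fin (n - 1)) W) S] [IsLocalization I.primeCompl S]
    (f : Polynomial S) (hmonic : f.Monic)
    (mt : Ideal (AdjoinRoot f)) [mt.IsMaximal] (hx : AdjoinRoot.root f ∈ mt)
    (R : Type) [CommRing R] [IsLocalRing R]
    [Algebra (AdjoinRoot f) R] [IsLocalization mt.primeCompl R]
    (hRnoeth : IsNoetherianRing R)
    (hram : (p : R) ∈ maximalIdeal R ^ 2) :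
    f.coeff 0 ∈ maximalIdeal S ∧ f.coeff 1 ∈ maximalIdeal S := by
  have hcomap := AdjoinRoot.comap_eq_maximalIdeal hmonic mt
  refine ⟨hcomap ▸ AdjoinRoot.coeff_zero_mem_comap hx, by_contra fun h1 => ?_⟩
  set μ := algebraMap (MvPolynomial (Fin (n - 1)) W) S
  set ν := algebraMap S (AdjoinRoot f)
  set π := algebraMap (AdjoinRoot f) R
  set J := MvPolynomial.idealOfVars (Fin (n - 1)) W
  have hmR : maximalIdeal R ≤ ((J.map μ).map ν).map π := by
    refine maximalIdeal_le_of_le_sup_sq ?_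
    calc maximalIdeal R = mt.map π := (IsLocalization.AtPrime.map_eq_maximalIdeal mt R).symm
      _ ≤ ((mt.comap ν).map ν ⊔ mt ^ 2).map π :=
        Ideal.map_mono (AdjoinRoot.le_map_comap_sup_sq hx (notMem_maximalIdeal.mp h1))
      _ = ((I.map μ).map ν).map π ⊔ maximalIdeal R ^ 2 := by
        rw [Ideal.map_sup, Ideal.map_pow, IsLocalization.AtPrime.map_eq_maximalIdeal mt R, hcomap,
          ← IsLocalization.AtPrime.map_eq_maximalIdeal I S]
      _ ≤ ((J.map μ).map ν).map π ⊔ maximalIdeal R ^ 2 := by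
        rw [hI, Ideal.span_union, Ideal.map_sup, Ideal.map_sup, Ideal.map_sup,
          sup_comm (Ideal.map π _), sup_assoc]
        refine sup_le_sup_left (sup_le ?_ le_rfl) _
        simpa [Ideal.map_span, Ideal.span_le] using hram
  obtain ⟨w, hw, hwp⟩ := (IsLocalization.algebraMap_mem_map_algebraMap_iff mt.primeCompl R _
    (p : AdjoinRoot f)).mp (by rw [map_natCast]; exact hmR (Ideal.pow_le_self two_ne_zero hram))
  have hpS : (p : S) ∈ J.map μ := AdjoinRoot.mem_of_algebraMap_mul_mem_map hmonic hx hcomap.ge hw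
    (by rw [map_natCast, mul_comm]; exact hwp)
  obtain ⟨c, hc, hcp⟩ := (IsLocalization.algebraMap_mem_map_algebraMap_iff I.primeCompl S J
    (p : MvPolynomial (Fin (n - 1)) W)).mp (by rw [map_natCast]; exact hpS)
  have hp0 : (p : W) ≠ 0 := fun h =>
    IsDiscreteValuationRing.not_a_field W (by rw [hW, h, Ideal.span_singleton_eq_bot.mpr rfl])
  exact hc (hI ▸ Ideal.span_mono Set.subset_union_right
    (MvPolynomial.mem_idealOfVars_of_mul_C_mem hp0 (by rw [map_natCast]; exact hcp)))

/-- Remark after Theorem 2.1.  Let `(W, pW)` be a discrete valuation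
ring whose maximal ideal is generated by `p`, let
`S = W[X₁, …, X_{n-1}]_{(p, X₁, …, X_{n-1})}` be the localization of the polynomial ring
at the maximal ideal `m_S = (p, X₁, …, X_{n-1})`, let `f(X) ∈ S[X]` be a monic
irreducible polynomial, and let `m̃` be a maximal ideal of `S[X]/(f(X))` (realized as
`AdjoinRoot f`) containing the image `x` of `X`.  If the localization
`R = (S[X]/(f(X)))_{m̃}` is a regular local ring with maximal ideal `m` satisfying
`p ∈ m²`, then the constant term `f(0)` of `f` and the coefficient of `X` in `f` both lie
in `m_S`. -/
theorem coeff_mem_maximalIdeal_of_ramified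
    (p : ℕ) (hp : p.Prime)
    (W : Type) [CommRing W] [IsDomain W] [IsDiscreteValuationRing W]
    (hW : maximalIdeal W = Ideal.span {(p : W)})
    (n : ℕ) (I : Ideal (MvPolynomial (Fin (n - 1)) W))
    (hI : I = Ideal.span ({MvPolynomial.C (p : W)} ∪ Set.range MvPolynomial.X))
    [I.IsMaximal]
    (S : Type) [CommRing S] [IsLocalRing S]
    [Algebra (MvPolynomial (Fin (n - 1)) W) S] [IsLocalization I.primeCompl S]
    (f : Polynomial S) (hmonic : f.Monic) (hirr : Irreducible f)
    (mt : Ideal (AdjoinRoot f)) [mt.IsMaximal] (hx : AdjoinRoot.root f ∈ mt)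
    (R : Type) [CommRing R] [IsLocalRing R]
    [Algebra (AdjoinRoot f) R] [IsLocalization mt.primeCompl R]
    (hRnoeth : IsNoetherianRing R)
    (hRreg : ∃ s : Finset R,
      (s.card : WithBot (WithTop ℕ)) = ringKrullDim R ∧
        Ideal.span (s : Set R) = maximalIdeal R)
    (hram : (p : R) ∈ maximalIdeal R ^ 2) :
    f.coeff 0 ∈ maximalIdeal S ∧ f.coeff 1 ∈ maximalIdeal S :=
  coeff_mem_maximalIdeal_of_ramified_general p W hW n I hI S f hmonic mt hx R hRnoeth hram
end

section
/- Let (V, pV) be a discrete valuation ring with uniformizer p, let (R, m) be a local ring containing V with p ∈ m, and let T_1, …, T_d ∈ R be elements whose images t_1, …, t_d in the residue field R/m are algebraically independent over the field V/pV. Then T_1, …, T_d are algebraically independent over V, i.e., no nonzero polynomial F ∈ V[Y_1, …, Y_d] satisfies F(T_1, …, T_d) = 0. -/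
open IsLocalRing

/-!
Suppose `F(T) = 0` with `F ≠ 0`. Whenever `c • G(T) = 0` for some `c ≠ 0` in `V`, the element
`G(T)` cannot be a unit of `R`, so it lies in `m` and the hypothesis makes `G` divisible by `p`;
writing `G = p G'` gives `(c p) • G'(T) = 0`. Starting from `F` and iterating, `F` is divisible
by every power of `p`, which is impossible for a nonzero polynomial over a DVR.
-/

open MvPolynomial

namespace MvPolynomial

variable {σ V : Type*} [CommRing V]

theorem eq_zero_of_forall_C_pow_dvd [IsDomain V] [WfDvdMonoid V] {p : V} (hp : ¬IsUnit p)
    {F : MvPolynomial σ V} (hF : ∀ n, C (p ^ n) ∣ F) : F = 0 := by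
  ext i
  by_contra hi
  exact FiniteMultiplicity.not_iff_forall.mpr (fun n => (C_dvd_iff_dvd_coeff _ _).mp (hF n) i)
    (FiniteMultiplicity.of_not_isUnit hp hi)

variable {R : Type*} [CommRing R] [IsLocalRing R] [Algebra V R] {T : σ → R} {p : V}

theorem C_dvd_of_algebraMap_mul_aeval_eq_zero
    (hind : ∀ F : MvPolynomial σ V, aeval T F ∈ maximalIdeal R →
      ∀ i, coeff i F ∈ Ideal.span {p})
    {c : V} (hc : algebraMap V R c ≠ 0) {G : MvPolynomial σ V}
    (hG : algebraMap V R c * aeval T G = 0) : C p ∣ G := by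
  have hGm : aeval T G ∈ maximalIdeal R := fun hu => hc (hu.mul_left_eq_zero.mp hG)
  exact (C_dvd_iff_dvd_coeff p G).mpr fun i => Ideal.mem_span_singleton.mp (hind G hGm i)

theorem C_pow_dvd_of_algebraMap_mul_aeval_eq_zero [IsDomain V]
    (hinj : Function.Injective (algebraMap V R)) (hp : p ≠ 0)
    (hind : ∀ F : MvPolynomial σ V, aeval T F ∈ maximalIdeal R →
      ∀ i, coeff i F ∈ Ideal.span {p})
    (n : ℕ) {c : V} (hc : c ≠ 0) {G : MvPolynomial σ V}
    (hG : algebraMap V R c * aeval T G = 0) : C (p ^ n) ∣ G := by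
  induction n generalizing c G with
  | zero => simp
  | succ n ih =>
    obtain ⟨G', rfl⟩ :=
      C_dvd_of_algebraMap_mul_aeval_eq_zero hind ((map_ne_zero_iff _ hinj).mpr hc) hG
    have hG' : algebraMap V R (c * p) * aeval T G' = 0 := by
      rwa [map_mul, aeval_C, ← mul_assoc, ← map_mul] at hG
    rw [pow_succ', C_mul]
    exact mul_dvd_mul_left _ (ih (mul_ne_zero hc hp) hG')

end MvPolynomial

theorem algebraicIndependent_of_residue_algebraicIndependent_general
    (V : Type) [CommRing V] [IsDomain V] [IsDiscreteValuationRing V]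
    (p : V) (hV : maximalIdeal V = Ideal.span {p})
    (R : Type) [CommRing R] [IsLocalRing R] [Algebra V R]
    (hinj : Function.Injective (algebraMap V R))
    (d : ℕ) (T : Fin d → R)
    (hind : ∀ F : MvPolynomial (Fin d) V,
      MvPolynomial.aeval T F ∈ maximalIdeal R →
      ∀ i : Fin d →₀ ℕ, MvPolynomial.coeff i F ∈ Ideal.span {p}) :
    ∀ F : MvPolynomial (Fin d) V, F ≠ 0 → MvPolynomial.aeval T F ≠ 0 := by
  intro F hF hF0
  have hp : p ≠ 0 := fun h =>
    IsDiscreteValuationRing.not_a_field V (by rw [hV, h, Ideal.span_singleton_eq_bot])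
  have hpm : p ∈ maximalIdeal V := hV ▸ Ideal.mem_span_singleton_self p
  refine hF (eq_zero_of_forall_C_pow_dvd hpm fun n =>
    C_pow_dvd_of_algebraMap_mul_aeval_eq_zero hinj hp hind n one_ne_zero ?_)
  rwa [map_one, one_mul]

/-- Let `(V, pV)` be a discrete valuation ring with uniformizer `p`, and
let `(R, m)` be a local ring containing `V` with `p ∈ m`. If the images of `T₁, …, T_d` in
the residue field `R/m` are algebraically independent over `V/pV` (equivalently: every
polynomial `F` over `V` with `F(T₁, …, T_d) ∈ m` has all of its coefficients in `pV`),
then `T₁, …, T_d` are algebraically independent over `V`, i.e. no nonzero polynomial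
`F ∈ V[Y₁, …, Y_d]` satisfies `F(T₁, …, T_d) = 0`. -/
theorem algebraicIndependent_of_residue_algebraicIndependent
    (V : Type) [CommRing V] [IsDomain V] [IsDiscreteValuationRing V]
    (p : V) (hV : maximalIdeal V = Ideal.span {p})
    (R : Type) [CommRing R] [IsLocalRing R] [Algebra V R]
    (hinj : Function.Injective (algebraMap V R))
    (hpm : algebraMap V R p ∈ maximalIdeal R)
    (d : ℕ) (T : Fin d → R)
    (hind : ∀ F : MvPolynomial (Fin d) V,
      MvPolynomial.aeval T F ∈ maximalIdeal R →
      ∀ i : Fin d →₀ ℕ, MvPolynomial.coeff i F ∈ Ideal.span {p}) :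
    ∀ F : MvPolynomial (Fin d) V, F ≠ 0 → MvPolynomial.aeval T F ≠ 0 :=
  algebraicIndependent_of_residue_algebraicIndependent_general V p hV R hinj d T hind
end
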